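/- For all integers k, l ≥ 1, all vectors m₁, …, m_k ∈ ℤ^l, and all signs ε₁, …, ε_k ∈ {−1, +1}, one has ∫_{[0,2π]^l} ∫_{[0,2π]^l} ∏_{i=1}^k ( cos(m_i·θ) + ε_i · cos(m_i·θ′) ) ∏_{j=1}^l dθ_j dθ′_j ≥ 0, where the integrals are with respect to Lebesgue measure and m·θ := Σ_{j=1}^l m_j θ_j. -/

import Mathlib

/-!
Write `χ_ε(+1) = 1`, `χ_ε(-1) = ε`. For `ε² = 1` each factor expands in characters as
`cos x + ε cos y = ½ ∑_{s,t = ±1} χ_ε(s) χ_ε(t) exp(i((s+t)/2 · x + (s-t)/2 · y))`.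
Multiplying out, the integrand is a combination of characters `e_A(θ) e_B(θ')` indexed by pairs of
sign vectors `(s, t)`, with `A + B = ∑ sᵢ mᵢ` and `A - B = ∑ tᵢ mᵢ`. Integrating over the box kills
every term except those with `A = B = 0`, i.e. `∑ sᵢ mᵢ = 0 = ∑ tᵢ mᵢ`; this condition splits over
`s` and `t`, so the double integral is `2⁻ᵏ (∑_s χ(s) (2π)ˡ [∑ sᵢ mᵢ = 0])²`.
-/

open MeasureTheory Real

noncomputable section

namespace Ginibre

open Complex (I)

section Characters

variable {ι : Type*} [Fintype ι]

def torusBox (ι : Type*) : Set (ι → ℝ) := Set.univ.pi fun _ => Set.Icc 0 (2 * π)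

def dot (n : ι → ℤ) (θ : ι → ℝ) : ℝ := ∑ j, (n j : ℝ) * θ j

def torusChar (n : ι → ℤ) (θ : ι → ℝ) : ℂ := Complex.exp (dot n θ * I)

def charIntegral (n : ι → ℤ) : ℝ := if n = 0 then (2 * π) ^ Fintype.card ι else 0

theorem dot_sum_smul {κ : Type*} [Fintype κ] (c : κ → ℤ) (m : κ → ι → ℤ) (θ : ι → ℝ) :
    dot (∑ i, c i • m i) θ = ∑ i, c i * dot (m i) θ := by
  simp only [dot, Finset.sum_apply, Pi.smul_apply, smul_eq_mul, Int.cast_sum, Int.cast_mul,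
    Finset.sum_mul, Finset.mul_sum, mul_assoc]
  exact Finset.sum_comm

theorem continuous_torusChar (n : ι → ℤ) : Continuous (torusChar n) := by
  unfold torusChar dot
  fun_prop

theorem integrableOn_torusChar (n : ι → ℤ) : IntegrableOn (torusChar n) (torusBox ι) :=
  (continuous_torusChar n).continuousOn.integrableOn_compact
    (isCompact_univ_pi fun _ => isCompact_Icc)

theorem integral_Icc_exp_int_mul_I (n : ℤ) :
    ∫ x in Set.Icc 0 (2 * π), Complex.exp (n * I * x) = if n = 0 then (2 * π : ℂ) else 0 := by
  rw [integral_Icc_eq_integral_Ioc, ← intervalIntegral.integral_of_le (by positivity)]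
  split_ifs with hn
  · simp [hn]
  · have hnI : (n : ℂ) * I ≠ 0 := by simp [hn]
    have hperiod : Complex.exp (n * I * (2 * π : ℝ)) = 1 := by
      rw [← Complex.exp_int_mul_two_pi_mul_I n]
      push_cast
      ring_nf
    rw [integral_exp_mul_complex hnI, hperiod]
    simp

theorem integral_torusBox_torusChar (n : ι → ℤ) :
    ∫ θ in torusBox ι, torusChar n θ = charIntegral n := by
  have hprod (θ : ι → ℝ) : torusChar n θ = ∏ j, Complex.exp (n j * I * θ j) := by
    rw [torusChar, dot, ← Complex.exp_sum]
    push_cast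
    simp only [Finset.sum_mul]
    exact congrArg Complex.exp (Finset.sum_congr rfl fun j _ => by ring)
  simp_rw [hprod]
  rw [torusBox, volume_pi, Measure.restrict_pi_pi,
    integral_fintype_prod_eq_prod fun j (x : ℝ) => Complex.exp (n j * I * x)]
  simp_rw [integral_Icc_exp_int_mul_I, Finset.prod_ite_zero, charIntegral, funext_iff]
  split_ifs <;> simp_all

theorem integral_integral_sum_torusChar_mul {G : Type*} [Fintype G] (c : G → ℂ)
    (a b : G → ι → ℤ) :
    ∫ θ in torusBox ι, ∫ θ' in torusBox ι, ∑ g, c g * (torusChar (a g) θ * torusChar (b g) θ') =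
      ∑ g, c g * (charIntegral (a g) * charIntegral (b g)) := by
  have hinner (θ : ι → ℝ) :
      ∫ θ' in torusBox ι, ∑ g, c g * (torusChar (a g) θ * torusChar (b g) θ') =
        ∑ g, c g * charIntegral (b g) * torusChar (a g) θ := by
    rw [integral_finsetSum _ fun g _ => ((integrableOn_torusChar (b g)).const_mul _).const_mul _]
    refine Finset.sum_congr rfl fun g _ => ?_
    rw [integral_const_mul, integral_const_mul, integral_torusBox_torusChar]
    ring
  simp_rw [hinner]
  rw [integral_finsetSum _ fun g _ => (integrableOn_torusChar (a g)).const_mul _]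
  refine Finset.sum_congr rfl fun g _ => ?_
  rw [integral_const_mul, integral_torusBox_torusChar]
  ring

/-- The Fourier-side form of the change of variables `(θ, θ') ↦ (θ + θ', θ - θ')`. -/
theorem charIntegral_mul_charIntegral (a b : ι → ℤ) :
    charIntegral a * charIntegral b = charIntegral (a + b) * charIntegral (a - b) := by
  have hzero : a + b = 0 ∧ a - b = 0 ↔ a = 0 ∧ b = 0 := by
    simp only [funext_iff, Pi.add_apply, Pi.sub_apply, Pi.zero_apply, ← forall_and]
    exact forall_congr' fun j => by omega
  simp only [charIntegral, ite_zero_mul_ite_zero, hzero]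

end Characters

section Signs

def sgn (s : Bool) : ℤ := if s then 1 else -1

/-- `(σ + τ) / 2` for the signs `σ = sgn s`, `τ = sgn t`: the division is exact. -/
def halfSum (s t : Bool) : ℤ := (sgn s + sgn t) / 2

def halfDiff (s t : Bool) : ℤ := (sgn s - sgn t) / 2

theorem halfSum_add_halfDiff (s t : Bool) : halfSum s t + halfDiff s t = sgn s := by
  cases s <;> cases t <;> decide

theorem halfSum_sub_halfDiff (s t : Bool) : halfSum s t - halfDiff s t = sgn t := by
  cases s <;> cases t <;> decide

def weight (ε : ℝ) (s : Bool) : ℝ := if s then 1 else ε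

/-- The diagonal terms `s = t` give `cos x` (the term `s = t = false` has weight `ε² = 1`),
the off-diagonal ones give `ε cos y`. -/
theorem cos_add_mul_cos {ε : ℝ} (hε : ε ^ 2 = 1) (x y : ℝ) :
    ((cos x + ε * cos y : ℝ) : ℂ) = 1 / 2 * ∑ s, ∑ t,
      (weight ε s * weight ε t : ℝ) * Complex.exp ((halfSum s t * x + halfDiff s t * y) * I) := by
  have hε' : (ε : ℂ) ^ 2 = 1 := by exact_mod_cast hε
  simp only [Fintype.sum_bool, weight, halfSum, halfDiff, sgn]
  push_cast [Complex.ofReal_cos, Complex.cos]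
  norm_num
  linear_combination (-(1 : ℂ) / 2 * Complex.exp (-(x * I))) * hε'

variable {κ : Type*} [Fintype κ]

theorem prod_cos_add_mul_cos [DecidableEq κ] (ε x y : κ → ℝ) (hε : ∀ i, ε i ^ 2 = 1) :
    ((∏ i, (cos (x i) + ε i * cos (y i)) : ℝ) : ℂ) =
      ∑ τ : κ → Bool, ∑ τ' : κ → Bool,
        ((1 / 2) ^ Fintype.card κ * (∏ i, weight (ε i) (τ i)) * ∏ i, weight (ε i) (τ' i) : ℝ) *
          Complex.exp ((∑ i, (halfSum (τ i) (τ' i) * x i + halfDiff (τ i) (τ' i) * y i) : ℝ) * I) := by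
  rw [Complex.ofReal_prod]
  simp_rw [cos_add_mul_cos (hε _), Finset.prod_mul_distrib, Finset.prod_const, Fintype.prod_sum,
    Finset.mul_sum, Finset.prod_mul_distrib]
  refine Fintype.sum_congr _ _ fun τ => Fintype.sum_congr _ _ fun τ' => ?_
  push_cast
  rw [Finset.sum_mul, Complex.exp_sum, Finset.prod_mul_distrib, Finset.card_univ]
  ring

theorem sum_halfSum_smul_add_sum_halfDiff_smul {M : Type*} [AddCommGroup M] (τ τ' : κ → Bool)
    (m : κ → M) :
    ∑ i, halfSum (τ i) (τ' i) • m i + ∑ i, halfDiff (τ i) (τ' i) • m i = ∑ i, sgn (τ i) • m i := by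
  simp only [← Finset.sum_add_distrib, ← add_smul, halfSum_add_halfDiff]

theorem sum_halfSum_smul_sub_sum_halfDiff_smul {M : Type*} [AddCommGroup M] (τ τ' : κ → Bool)
    (m : κ → M) :
    ∑ i, halfSum (τ i) (τ' i) • m i - ∑ i, halfDiff (τ i) (τ' i) • m i = ∑ i, sgn (τ' i) • m i := by
  simp only [← Finset.sum_sub_distrib, ← sub_smul, halfSum_sub_halfDiff]

end Signs

variable {ι κ : Type*} [Fintype ι] [Fintype κ]

theorem exp_sum_dot_mul_I_eq_torusChar_mul (a b : κ → ℤ) (m : κ → ι → ℤ) (θ θ' : ι → ℝ) :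
    Complex.exp ((∑ i, (a i * dot (m i) θ + b i * dot (m i) θ') : ℝ) * I) =
      torusChar (∑ i, a i • m i) θ * torusChar (∑ i, b i • m i) θ' := by
  rw [torusChar, torusChar, dot_sum_smul, dot_sum_smul, ← Complex.exp_add, Finset.sum_add_distrib]
  push_cast
  ring_nf

theorem integral_integral_prod_cos_add_mul_cos [DecidableEq κ] (m : κ → ι → ℤ) (ε : κ → ℝ)
    (hε : ∀ i, ε i ^ 2 = 1) :
    ∫ θ in torusBox ι, ∫ θ' in torusBox ι, ∏ i, (cos (dot (m i) θ) + ε i * cos (dot (m i) θ')) =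
      (1 / 2) ^ Fintype.card κ *
        (∑ τ : κ → Bool, (∏ i, weight (ε i) (τ i)) * charIntegral (∑ i, sgn (τ i) • m i)) ^ 2 := by
  apply Complex.ofReal_injective
  simp only [← integral_complex_ofReal]
  simp_rw [prod_cos_add_mul_cos ε _ _ hε, exp_sum_dot_mul_I_eq_torusChar_mul, ← Fintype.sum_prod_type']
  rw [integral_integral_sum_torusChar_mul]
  simp only [← Complex.ofReal_mul, ← Complex.ofReal_sum, Complex.ofReal_inj, Fintype.sum_prod_type]
  rw [sq, Finset.sum_mul_sum, Finset.mul_sum]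
  refine Fintype.sum_congr _ _ fun τ => ?_
  rw [Finset.mul_sum]
  refine Fintype.sum_congr _ _ fun τ' => ?_
  rw [charIntegral_mul_charIntegral, sum_halfSum_smul_add_sum_halfDiff_smul,
    sum_halfSum_smul_sub_sum_halfDiff_smul]
  ring

end Ginibre

theorem ginibre_inequality (k l : ℕ)
    (m : Fin k → Fin l → ℤ) (ε : Fin k → ℝ) (hε : ∀ i, ε i = 1 ∨ ε i = -1) :
    0 ≤ ∫ θ in Set.univ.pi fun _ : Fin l => Set.Icc (0 : ℝ) (2 * π),
          ∫ θ' in Set.univ.pi fun _ : Fin l => Set.Icc (0 : ℝ) (2 * π),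
            ∏ i : Fin k,
              (Real.cos (∑ j, (m i j : ℝ) * θ j) + ε i * Real.cos (∑ j, (m i j : ℝ) * θ' j)) := by
  have key := Ginibre.integral_integral_prod_cos_add_mul_cos m ε fun i => sq_eq_one_iff.mpr (hε i)
  exact key.ge.trans' (by positivity)

end
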